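/- arXiv:1905.10807 — 4 statements merged into one kernel-verified Lean document; each statement's English description precedes it below -/
import Mathlib

section
/- For all integers n ≥ k ≥ t ≥ 1 with n > k, the packing number satisfies D(n,k,t) ≤ ⌊(n/k)·D(n−1,k−1,t−1)⌋, where D(n,k,t) is the maximum number of k-subsets of an n-set such that every t-subset is contained in at most one of them. -/
/-- The packing number D(n,k,t): the maximum number of k-subsets of an n-set
such that every t-subset is contained in at most one of them. -/
noncomputable def packingNumber (n k t : ℕ) : ℕ :=
  sSup {m | ∃ B : Finset (Finset (Fin n)),
    (∀ b ∈ B, b.card = k) ∧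
    (∀ T : Finset (Fin n), T.card = t → (B.filter (fun b => T ⊆ b)).card ≤ 1) ∧
    B.card = m}

/-!
Double counting the incidences between points and blocks of a packing `B` gives
`#B * k = ∑ₓ #{b ∈ B | x ∈ b}`. For a fixed point `x`, deleting `x` from the blocks through it
yields a `(t-1)-(n-1, k-1, 1)` packing on the remaining `n - 1` points, so each term of the sum
is at most `D(n-1, k-1, t-1)`.
-/

open Finset

def IsPacking {α : Type*} [DecidableEq α] (k t : ℕ) (B : Finset (Finset α)) : Prop :=
  (∀ b ∈ B, #b = k) ∧ ∀ T : Finset α, #T = t → #(B.filter (T ⊆ ·)) ≤ 1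

namespace IsPacking

variable {α β : Type*} [DecidableEq α] [DecidableEq β] {k t : ℕ}

theorem card_le_packingNumber {n : ℕ} {B : Finset (Finset (Fin n))} (hB : IsPacking k t B) :
    #B ≤ packingNumber n k t :=
  le_csSup ⟨Fintype.card (Finset (Fin n)), by rintro _ ⟨B, -, -, rfl⟩; exact card_le_univ B⟩
    ⟨B, hB.1, hB.2, rfl⟩

theorem of_map (g : β ↪ α) {B : Finset (Finset β)}
    (hB : IsPacking k t (B.map (mapEmbedding g).toEmbedding)) : IsPacking k t B := by
  refine ⟨fun b hb => ?_, fun T hT => ?_⟩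
  · simpa using hB.1 _ (mem_map_of_mem _ hb)
  · have hfilter : (B.map (mapEmbedding g).toEmbedding).filter (T.map g ⊆ ·) =
        (B.filter (T ⊆ ·)).map (mapEmbedding g).toEmbedding := by
      rw [filter_map]
      congr! 2 with b
      simp [mapEmbedding_apply]
    simpa [hfilter] using hB.2 (T.map g) (by rw [card_map, hT])

theorem link (x : α) {B : Finset (Finset α)} (hB : IsPacking (k + 1) (t + 1) B) :
    IsPacking k t ((B.filter (x ∈ ·)).image (·.erase x)) := by
  refine ⟨?_, fun T hT => ?_⟩
  · simp only [mem_image, mem_filter]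
    rintro _ ⟨b, ⟨hbB, hxb⟩, rfl⟩
    rw [card_erase_of_mem hxb, hB.1 b hbB, Nat.add_sub_cancel]
  by_cases hxT : x ∈ T
  · simp only [card_le_one, mem_filter, mem_image]
    rintro _ ⟨⟨b, -, rfl⟩, hTb⟩
    exact absurd (hTb hxT) (notMem_erase x b)
  calc #(((B.filter (x ∈ ·)).image (·.erase x)).filter (T ⊆ ·))
      ≤ #((B.filter (insert x T ⊆ ·)).image (·.erase x)) := by
        refine card_le_card fun c hc => ?_
        simp only [mem_filter, mem_image] at hc ⊢
        obtain ⟨⟨b, ⟨hbB, hxb⟩, rfl⟩, hTb⟩ := hc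
        exact ⟨b, ⟨hbB, insert_subset hxb (hTb.trans (erase_subset x b))⟩, rfl⟩
    _ ≤ #(B.filter (insert x T ⊆ ·)) := card_image_le
    _ ≤ 1 := hB.2 _ (by rw [card_insert_of_notMem hxT, hT])

theorem card_link (x : α) (B : Finset (Finset α)) :
    #((B.filter (x ∈ ·)).image (·.erase x)) = #(B.filter (x ∈ ·)) :=
  card_image_of_injOn <| (erase_injOn' x).mono fun _ hb => (mem_filter.1 hb).2

theorem card_le_packingNumber_of_subset_range {m : ℕ} (g : Fin m ↪ α) {B : Finset (Finset α)}
    (hB : IsPacking k t B) (hrange : ∀ b ∈ B, (b : Set α) ⊆ Set.range g) :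
    #B ≤ packingNumber m k t := by
  obtain ⟨B', -, rfl⟩ : ∃ B' ⊆ univ, B = B'.map (mapEmbedding g).toEmbedding := by
    refine subset_map_iff.1 fun b hb => ?_
    obtain ⟨u, -, rfl⟩ : ∃ u ⊆ univ, b = u.map g :=
      subset_map_iff.1 (by simpa [← coe_subset] using hrange b hb)
    simp [mapEmbedding_apply]
  rw [card_map]
  exact (hB.of_map g).card_le_packingNumber

theorem card_filter_mem_le {n : ℕ} {B : Finset (Finset (Fin n))}
    (hB : IsPacking (k + 1) (t + 1) B) (x : Fin n) :
    #(B.filter (x ∈ ·)) ≤ packingNumber (n - 1) k t := by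
  obtain ⟨m, rfl⟩ : ∃ m, n = m + 1 := ⟨n - 1, by have := x.pos; omega⟩
  rw [← card_link, Nat.add_sub_cancel]
  refine (hB.link x).card_le_packingNumber_of_subset_range x.succAboveEmb ?_
  simp only [mem_image, mem_filter]
  rintro _ ⟨b, -, rfl⟩
  simp [Fin.succAboveEmb, Set.subset_def]

end IsPacking

theorem card_mul_le_card_mul_of_card_filter_mem_le {α : Type*} [Fintype α] [DecidableEq α]
    {B : Finset (Finset α)} {k D : ℕ} (hcard : ∀ b ∈ B, #b = k)
    (hdeg : ∀ x, #(B.filter (x ∈ ·)) ≤ D) : #B * k ≤ Fintype.card α * D :=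
  card_mul_le_card_mul (fun b x => x ∈ b)
    (fun b hb => by simp [bipartiteAbove, hcard b hb])
    (fun x _ => hdeg x)

theorem stmt0_general (n k t : ℕ) (ht : 1 ≤ t) (htk : t ≤ k) :
    packingNumber n k t ≤ n * packingNumber (n - 1) (k - 1) (t - 1) / k := by
  obtain ⟨s, rfl⟩ : ∃ s, t = s + 1 := ⟨t - 1, by omega⟩
  obtain ⟨j, rfl⟩ : ∃ j, k = j + 1 := ⟨k - 1, by omega⟩
  refine csSup_le' ?_
  rintro _ ⟨B, hcard, hpack, rfl⟩
  have hB : IsPacking (j + 1) (s + 1) B := ⟨hcard, hpack⟩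
  rw [Nat.le_div_iff_mul_le j.succ_pos, Nat.add_sub_cancel, Nat.add_sub_cancel]
  simpa using card_mul_le_card_mul_of_card_filter_mem_le hcard hB.card_filter_mem_le

theorem stmt0 (n k t : ℕ) (ht : 1 ≤ t) (htk : t ≤ k) (hkn : k < n) :
    packingNumber n k t ≤ n * packingNumber (n - 1) (k - 1) (t - 1) / k :=
  stmt0_general n k t ht htk
end

section
/- Let n, k be positive integers with n > k ≥ 4, (n−2) ≡ 0 (mod k−2) and (n−1)(n−2) ≢ 0 (mod (k−1)(k−2)). Then D(n,k,3) ≤ J'(n,k,3), where J'(n,k,3) = ⌊(n/k)·(⌊(n−1)(n−2)/((k−1)(k−2))⌋ − 1)⌋. -/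
open Finset

namespace Packing

variable {α : Type*} [DecidableEq α]

structure IsPairPacking (C : Finset (Finset α)) (K : ℕ) : Prop where
  card_eq : ∀ b ∈ C, #b = K
  card_inter_le : (C : Set (Finset α)).Pairwise fun b c ↦ #(b ∩ c) ≤ 1

def degree (C : Finset (Finset α)) (y : α) : ℕ := #{b ∈ C | y ∈ b}

def neighbors (C : Finset (Finset α)) (y : α) : Finset α :=
  {b ∈ C | y ∈ b}.biUnion (·.erase y)

theorem mem_neighbors {C : Finset (Finset α)} {y z : α} :
    z ∈ neighbors C y ↔ z ≠ y ∧ ∃ b ∈ C, y ∈ b ∧ z ∈ b := by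
  simp only [neighbors, mem_biUnion, mem_filter, mem_erase]
  aesop

theorem mem_neighbors_comm {C : Finset (Finset α)} {y z : α} :
    z ∈ neighbors C y ↔ y ∈ neighbors C z := by
  simp only [mem_neighbors]
  aesop

theorem IsPairPacking.card_neighbors {C : Finset (Finset α)} {K : ℕ} (hC : IsPairPacking C K)
    (y : α) : #(neighbors C y) = degree C y * (K - 1) := by
  rw [neighbors, card_biUnion, sum_const_nat, degree]
  · intro b hb
    rw [card_erase_of_mem (mem_filter.1 hb).2, hC.card_eq b (mem_filter.1 hb).1]
  · intro b hb c hc hbc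
    simp only [coe_filter] at hb hc
    refine disjoint_left.2 fun z hzb hzc ↦ ?_
    have hyz : {y, z} ⊆ b ∩ c := by
      simp [insert_subset_iff, hb.2, hc.2, mem_of_mem_erase hzb, mem_of_mem_erase hzc]
    have hle := (card_le_card hyz).trans (hC.card_inter_le hb.1 hc.1 hbc)
    rw [card_pair (ne_of_mem_erase hzb).symm] at hle
    omega

theorem card_inter_lt_of_card_filter_le_one {β : Type*} [DecidableEq β] {B : Finset (Finset β)}
    {t : ℕ} (hB : ∀ T : Finset β, #T = t → #{b ∈ B | T ⊆ b} ≤ 1) :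
    (B : Set (Finset β)).Pairwise fun b c ↦ #(b ∩ c) < t := by
  intro b hb c hc hbc
  by_contra! h
  obtain ⟨T, hT, hTcard⟩ := exists_subset_card_eq h
  exact hbc <| card_le_one.1 (hB T hTcard) b (mem_filter.2 ⟨hb, hT.trans inter_subset_left⟩)
    c (mem_filter.2 ⟨hc, hT.trans inter_subset_right⟩)

def derived (B : Finset (Finset α)) (x : α) : Finset (Finset {y // y ≠ x}) :=
  {b ∈ B | x ∈ b}.image (·.subtype (· ≠ x))

theorem card_derived (B : Finset (Finset α)) (x : α) : #(derived B x) = degree B x := by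
  refine card_image_of_injOn fun b hb c hc hbc ↦ ?_
  simp only [coe_filter] at hb hc
  ext z
  by_cases hz : z = x
  · subst hz
    simp [hb.2, hc.2]
  · simpa [hz] using congrArg (⟨z, hz⟩ ∈ ·) hbc

theorem isPairPacking_derived {B : Finset (Finset α)} {k : ℕ} (hB : ∀ b ∈ B, #b = k)
    (hinter : (B : Set (Finset α)).Pairwise fun b c ↦ #(b ∩ c) < 3) (x : α) :
    IsPairPacking (derived B x) (k - 1) where
  card_eq := by
    simp only [derived, mem_image, mem_filter]
    rintro _ ⟨b, ⟨hb, hxb⟩, rfl⟩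
    rw [card_subtype, filter_ne', card_erase_of_mem hxb, hB b hb]
  card_inter_le := by
    simp only [derived, coe_image, coe_filter]
    rintro _ ⟨b, ⟨hb, hxb⟩, rfl⟩ _ ⟨c, ⟨hc, hxc⟩, rfl⟩ hbc
    have hlt : #(b ∩ c) < 3 := hinter hb hc fun h ↦ hbc (h ▸ rfl)
    have hinter_subtype :
        b.subtype (· ≠ x) ∩ c.subtype (· ≠ x) = (b ∩ c).subtype (· ≠ x) := by
      ext; simp
    rw [hinter_subtype, card_subtype, filter_ne', card_erase_of_mem (mem_inter.2 ⟨hxb, hxc⟩)]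
    omega

variable [Fintype α]

theorem sum_degree (C : Finset (Finset α)) : ∑ y, degree C y = ∑ b ∈ C, #b := by
  simpa [degree, bipartiteAbove, bipartiteBelow] using
    sum_card_bipartiteAbove_eq_sum_card_bipartiteBelow (s := univ) (t := C) (· ∈ ·)

theorem neighbors_subset (C : Finset (Finset α)) (y : α) : neighbors C y ⊆ univ.erase y :=
  fun _ hz ↦ mem_erase.2 ⟨(mem_neighbors.1 hz).1, mem_univ _⟩

def deficient (C : Finset (Finset α)) (r : ℕ) : Finset α := {z | degree C z < r}

theorem card_deficient_le_sum (C : Finset (Finset α)) (r : ℕ) :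
    #(deficient C r) ≤ ∑ z, (r - degree C z) := by
  rw [deficient, card_filter]
  gcongr with z
  split_ifs <;> omega

namespace IsPairPacking

variable {C : Finset (Finset α)} {K r : ℕ}

theorem degree_le (hC : IsPairPacking C K) (hK : 2 ≤ K) (hr : Fintype.card α - 1 = r * (K - 1))
    (y : α) : degree C y ≤ r := by
  have h := card_le_card (neighbors_subset C y)
  rw [hC.card_neighbors, card_erase_of_mem (mem_univ _), card_univ, hr] at h
  exact Nat.le_of_mul_le_mul_right h (by omega)

theorem degree_lt_of_notMem_neighbors (hC : IsPairPacking C K) (hK : 2 ≤ K)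
    (hr : Fintype.card α - 1 = r * (K - 1)) {y z : α} (hyz : y ≠ z) (hy : y ∉ neighbors C z) :
    degree C z < r := by
  refine (hC.degree_le hK hr z).lt_of_ne fun hz ↦ hy ?_
  have hfull : neighbors C z = univ.erase z := by
    refine eq_of_subset_of_card_le (neighbors_subset C z) ?_
    rw [hC.card_neighbors, card_erase_of_mem (mem_univ _), card_univ, hr, hz]
  simp [hfull, hyz]

theorem le_card_deficient (hC : IsPairPacking C K) (hK : 2 ≤ K)
    (hr : Fintype.card α - 1 = r * (K - 1)) {y : α} (hy : y ∈ deficient C r) :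
    K ≤ #(deficient C r) := by
  set leave := univ \ insert y (neighbors C y)
  have hleave : leave ⊆ (deficient C r).erase y := by
    intro z hz
    simp only [leave, mem_sdiff, mem_insert, not_or, mem_univ, true_and] at hz
    refine mem_erase.2 ⟨hz.1, mem_filter.2 ⟨mem_univ _, ?_⟩⟩
    exact hC.degree_lt_of_notMem_neighbors hK hr (Ne.symm hz.1)
      (mem_neighbors_comm.not.1 hz.2)
  have hcard : #leave = (r - degree C y) * (K - 1) := by
    rw [card_sdiff_of_subset (subset_univ _),
      card_insert_of_notMem fun h ↦ (mem_neighbors.1 h).1 rfl, hC.card_neighbors, card_univ,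
      Nat.sub_mul, ← hr]
    omega
  have hleave_ge : K - 1 ≤ #leave :=
    hcard ▸ Nat.le_mul_of_pos_left _ (Nat.sub_pos_of_lt (mem_filter.1 hy).2)
  have hleave_le := card_le_card hleave
  rw [card_erase_of_mem hy] at hleave_le
  omega

theorem sum_sub_degree_add (hC : IsPairPacking C K) (hK : 2 ≤ K)
    (hr : Fintype.card α - 1 = r * (K - 1)) :
    ∑ z, (r - degree C z) + #C * K = Fintype.card α * r := by
  rw [← sum_const_nat hC.card_eq, ← sum_degree, ← sum_add_distrib,
    sum_congr rfl fun z _ ↦ Nat.sub_add_cancel (hC.degree_le hK hr z)]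
  simp

theorem card_lt_of_not_dvd (hC : IsPairPacking C K) (hK : 2 ≤ K)
    (hr : Fintype.card α - 1 = r * (K - 1)) (hndvd : ¬ K ∣ Fintype.card α * r) :
    #C < Fintype.card α * r / K := by
  by_contra! hge
  have htotal := hC.sum_sub_degree_add hK hr
  obtain ⟨y, -, hy⟩ := exists_ne_zero_of_sum_ne_zero fun h ↦
    hndvd (Dvd.intro_left #C (by rw [h, zero_add] at htotal; exact htotal))
  have hdef : K ≤ ∑ z, (r - degree C z) :=
    (hC.le_card_deficient hK hr (y := y) (mem_filter.2 ⟨mem_univ _, by omega⟩)).trans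
      (card_deficient_le_sum C r)
  -- with `v = card α`, `#C ≥ ⌊vr/K⌋` leaves a total deficiency of at most `vr % K < K`
  have hq : K * (Fintype.card α * r / K) ≤ #C * K := by rw [mul_comm]; gcongr
  have hdiv := Nat.div_add_mod (Fintype.card α * r) K
  have hmod := Nat.mod_lt (Fintype.card α * r) (by omega : 0 < K)
  omega

end IsPairPacking

theorem degree_lt_of_card_filter_le_one {B : Finset (Finset α)} {k r : ℕ}
    (hB : ∀ b ∈ B, #b = k) (htriple : ∀ T : Finset α, #T = 3 → #{b ∈ B | T ⊆ b} ≤ 1)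
    (hk : 3 ≤ k) (hr : Fintype.card α - 2 = r * (k - 2))
    (hndvd : ¬ (k - 1) ∣ (Fintype.card α - 1) * r) (x : α) :
    degree B x < (Fintype.card α - 1) * r / (k - 1) := by
  have hcard : Fintype.card {y // y ≠ x} = Fintype.card α - 1 := by simp
  rw [← card_derived, ← hcard]
  have hC := isPairPacking_derived hB (card_inter_lt_of_card_filter_le_one htriple) x
  refine hC.card_lt_of_not_dvd (by omega) ?_ (hcard ▸ hndvd)
  rw [hcard]
  simpa [Nat.sub_sub] using hr

end Packing

open Packing

theorem stmt4_general (n k : ℕ) (hk : 4 ≤ k)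
    (h1 : (k - 2) ∣ (n - 2))
    (h2 : ¬ ((k - 1) * (k - 2) ∣ (n - 1) * (n - 2))) :
    packingNumber n k 3 ≤ n * ((n - 1) * (n - 2) / ((k - 1) * (k - 2)) - 1) / k := by
  obtain ⟨r, hr⟩ := h1
  have hfactor : (n - 1) * (n - 2) = (n - 1) * r * (k - 2) := by rw [hr]; ring
  have hndvd : ¬ (k - 1) ∣ (n - 1) * r := fun h ↦ h2 (hfactor ▸ mul_dvd_mul_right h _)
  rw [hfactor, Nat.mul_div_mul_right _ _ (by omega : 0 < k - 2)]
  refine csSup_le' ?_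
  rintro _ ⟨B, hBk, hB, rfl⟩
  have hdeg (x : Fin n) : degree B x ≤ (n - 1) * r / (k - 1) - 1 := by
    have hlt := degree_lt_of_card_filter_le_one hBk hB (by omega)
      (by rw [Fintype.card_fin, hr, mul_comm]) (by rwa [Fintype.card_fin]) x
    rw [Fintype.card_fin] at hlt
    omega
  rw [Nat.le_div_iff_mul_le (by omega)]
  calc #B * k = ∑ x, degree B x := by rw [sum_degree, sum_const_nat hBk]
    _ ≤ ∑ _x : Fin n, ((n - 1) * r / (k - 1) - 1) := sum_le_sum fun x _ ↦ hdeg x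
    _ = n * ((n - 1) * r / (k - 1) - 1) := by simp

theorem stmt4 (n k : ℕ) (hk : 4 ≤ k) (hkn : k < n)
    (h1 : (k - 2) ∣ (n - 2))
    (h2 : ¬ ((k - 1) * (k - 2) ∣ (n - 1) * (n - 2))) :
    packingNumber n k 3 ≤ n * ((n - 1) * (n - 2) / ((k - 1) * (k - 2)) - 1) / k :=
  stmt4_general n k hk h1 h2
end

section
/- Let k ≥ 4 and n satisfy (n−2) ≡ 0 (mod k−2) and (n−1)(n−2) ≡ 0 (mod (k−1)(k−2)), and let β be the residue of n(n−1)(n−2) modulo k(k−1)(k−2) in [0, k(k−1)(k−2)). Then β is divisible by (k−1)(k−2), and moreover β is divisible by 3; in particular, if 3 divides k then writing β = q(k−1)(k−2), 3 divides q. Additionally, if k is even then n is even and q is even. -/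
/-!
Write `d = (k-1)(k-2)`, `M = k d` and `P = n(n-1)(n-2)`, so that `β = P % M`. Any common divisor
of `P` and `M` divides `β`: `d` is one because it divides `(n-1)(n-2)`, and `3` is one because
both are products of three consecutive integers. If `3 ∣ k` then `3` is prime to `d`, so `3d`
divides `P` and `M`, hence `β`, and `3 ∣ β / d`. If `2 ∣ k` then `2 ∣ k - 2 ∣ n - 2`, so `n` is
even and `2d` divides `P` and `M`, hence `2 ∣ β / d`.
-/

namespace Nat

theorem three_dvd_mul_sub_one_mul_sub_two (n : ℕ) : 3 ∣ n * (n - 1) * (n - 2) := by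
  have h := (dvd_factorial (by norm_num) le_rfl).trans (factorial_dvd_descFactorial n 3)
  simpa [descFactorial, mul_comm, mul_left_comm] using h

theorem mul_dvd_mul_sub_one_mul_sub_two {c d n : ℕ} (hc : c ∣ n) (hd : d ∣ (n - 1) * (n - 2)) :
    d * c ∣ n * (n - 1) * (n - 2) := by
  rw [mul_comm d, mul_assoc]
  exact mul_dvd_mul hc hd

theorem coprime_sub_one_mul_sub_two_three {k : ℕ} (hk : 3 ≤ k) (h3k : 3 ∣ k) :
    Coprime ((k - 1) * (k - 2)) 3 :=
  (prime_three.coprime_iff_not_dvd.2 (by omega)).symm.mul_left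
    (prime_three.coprime_iff_not_dvd.2 (by omega)).symm

theorem dvd_mod_div_of_mul_dvd {a m d c : ℕ} (hm : d * c ∣ m) (ha : d * c ∣ a) :
    c ∣ a % m / d :=
  dvd_div_of_mul_dvd ((dvd_mod_iff hm).2 ha)

end Nat

theorem stmt16 (n k : ℕ) (hk : 4 ≤ k) (hkn : k < n)
    (h1 : (k - 2) ∣ (n - 2))
    (h2 : (k - 1) * (k - 2) ∣ (n - 1) * (n - 2)) :
    (k - 1) * (k - 2) ∣ (n * (n - 1) * (n - 2)) % (k * (k - 1) * (k - 2)) ∧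
    3 ∣ (n * (n - 1) * (n - 2)) % (k * (k - 1) * (k - 2)) ∧
    (3 ∣ k →
      3 ∣ ((n * (n - 1) * (n - 2)) % (k * (k - 1) * (k - 2))) / ((k - 1) * (k - 2))) ∧
    (2 ∣ k → 2 ∣ n ∧
      2 ∣ ((n * (n - 1) * (n - 2)) % (k * (k - 1) * (k - 2))) / ((k - 1) * (k - 2))) := by
  have hdP : (k - 1) * (k - 2) ∣ n * (n - 1) * (n - 2) := by
    simpa using Nat.mul_dvd_mul_sub_one_mul_sub_two (one_dvd n) h2
  have hdM : (k - 1) * (k - 2) ∣ k * (k - 1) * (k - 2) := by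
    simpa using Nat.mul_dvd_mul_sub_one_mul_sub_two (one_dvd k) dvd_rfl
  have h3P := Nat.three_dvd_mul_sub_one_mul_sub_two n
  have h3M := Nat.three_dvd_mul_sub_one_mul_sub_two k
  refine ⟨(Nat.dvd_mod_iff hdM).2 hdP, (Nat.dvd_mod_iff h3M).2 h3P, fun h3k => ?_, fun h2k => ?_⟩
  · exact Nat.dvd_mod_div_of_mul_dvd (Nat.mul_dvd_mul_sub_one_mul_sub_two h3k dvd_rfl)
      ((Nat.coprime_sub_one_mul_sub_two_three (by omega) h3k).mul_dvd_of_dvd_of_dvd hdP h3P)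
  · have h2n : 2 ∣ n := by
      have : 2 ∣ n - 2 := (Nat.dvd_sub h2k dvd_rfl).trans h1
      omega
    exact ⟨h2n, Nat.dvd_mod_div_of_mul_dvd (Nat.mul_dvd_mul_sub_one_mul_sub_two h2k dvd_rfl)
      (Nat.mul_dvd_mul_sub_one_mul_sub_two h2n h2)⟩
end

section
/- Let k ≥ 4 and suppose (n−2) ≡ 0 (mod k−2) and (n−1)(n−2) ≡ p(k−2) (mod (k−1)(k−2)) with 1 ≤ p ≤ k−2. Define β ∈ [0, k(k−1)(k−2)) by β ≡ n(n−1)(n−2) − n(p+k−1)(k−2) (mod k(k−1)(k−2)). Then β is divisible by (k−1)(k−2), and J'(n,k,3) := ⌊(n/k)·(⌊(n−1)(n−2)/((k−1)(k−2))⌋ − 1)⌋ equals (n(n−1)(n−2) − n(p+k−1)(k−2) − β)/(k(k−1)(k−2)). -/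
/-!
Write `(n-1)(n-2) = q(k-1)(k-2) + p(k-2)`; the congruence and `p ≤ k-2` make `p(k-2)` the
remainder, so `q` is the inner floor. Then the numerator collapses to
`n(n-1)(n-2) - n(p+k-1)(k-2) = n(q-1)·(k-1)(k-2)`, and dividing `m = n(q-1)` by `k` with
remainder gives both claims: `β = (m mod k)(k-1)(k-2)` and `J' = ⌊m/k⌋`.
-/

lemma Nat.cast_sub_one_mul_sub_two {n : ℕ} (hn : 2 ≤ n) :
    (((n - 1) * (n - 2) : ℕ) : ℤ) = ((n : ℤ) - 1) * ((n : ℤ) - 2) := by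
  push_cast [Nat.cast_sub (by omega : 1 ≤ n), Nat.cast_sub hn]
  ring

lemma mul_sub_one_mul_sub_two_sub_eq {R : Type*} [CommRing R] {n k p q : R}
    (h : (n - 1) * (n - 2) = q * ((k - 1) * (k - 2)) + p * (k - 2)) :
    n * (n - 1) * (n - 2) - n * (p + k - 1) * (k - 2) = n * (q - 1) * ((k - 1) * (k - 2)) := by
  linear_combination n * h

lemma Int.dvd_mul_emod_mul (m k D : ℤ) : D ∣ m * D % (k * D) :=
  (EuclideanDomain.dvd_mod_iff (dvd_mul_left D k)).2 (dvd_mul_left D m)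

lemma Int.ediv_mul_mul_eq_sub_emod (m k : ℤ) {D : ℤ} (hD : 0 < D) :
    m / k * (k * D) = m * D - m * D % (k * D) := by
  rw [mul_comm m D, mul_comm k D, Int.mul_emod_mul_of_pos _ _ hD]
  linear_combination D * Int.mul_ediv_add_emod m k

theorem stmt19_general (n k p : ℕ) (hk : 4 ≤ k) (hkn : k < n)
    (hp2 : p ≤ k - 2)
    (h2 : (n - 1) * (n - 2) ≡ p * (k - 2) [MOD (k - 1) * (k - 2)]) :
    ((k : ℤ) - 1) * ((k : ℤ) - 2) ∣
      (((n : ℤ) * ((n : ℤ) - 1) * ((n : ℤ) - 2)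
          - (n : ℤ) * ((p : ℤ) + (k : ℤ) - 1) * ((k : ℤ) - 2))
        % ((k : ℤ) * ((k : ℤ) - 1) * ((k : ℤ) - 2))) ∧
    ((n * ((n - 1) * (n - 2) / ((k - 1) * (k - 2)) - 1) / k : ℕ) : ℤ)
        * ((k : ℤ) * ((k : ℤ) - 1) * ((k : ℤ) - 2)) =
      (n : ℤ) * ((n : ℤ) - 1) * ((n : ℤ) - 2)
        - (n : ℤ) * ((p : ℤ) + (k : ℤ) - 1) * ((k : ℤ) - 2)
        - (((n : ℤ) * ((n : ℤ) - 1) * ((n : ℤ) - 2)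
            - (n : ℤ) * ((p : ℤ) + (k : ℤ) - 1) * ((k : ℤ) - 2))
          % ((k : ℤ) * ((k : ℤ) - 1) * ((k : ℤ) - 2))) := by
  set q := (n - 1) * (n - 2) / ((k - 1) * (k - 2))
  have hD : 0 < (k - 1) * (k - 2) := Nat.mul_pos (by omega) (by omega)
  have hq : 1 ≤ q := Nat.div_pos (Nat.mul_le_mul (by omega) (by omega)) hD
  have hrem : (n - 1) * (n - 2) % ((k - 1) * (k - 2)) = p * (k - 2) :=
    Eq.trans h2 (Nat.mod_eq_of_lt (Nat.mul_lt_mul_of_pos_right (by omega) (by omega)))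
  have hdecomp : ((n : ℤ) - 1) * ((n : ℤ) - 2)
      = q * (((k : ℤ) - 1) * ((k : ℤ) - 2)) + p * ((k : ℤ) - 2) := by
    have hnat : (n - 1) * (n - 2) = q * ((k - 1) * (k - 2)) + p * (k - 2) := by
      rw [← hrem]
      exact (Nat.div_add_mod' _ _).symm
    rw [← Nat.cast_sub_one_mul_sub_two (by omega), ← Nat.cast_sub_one_mul_sub_two (by omega),
      hnat]
    push_cast [Nat.cast_sub (by omega : 2 ≤ k)]
    ring
  have hfloor : ((n * (q - 1) / k : ℕ) : ℤ) = n * ((q : ℤ) - 1) / k := by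
    push_cast [Int.natCast_div, Nat.cast_sub hq]
    ring
  have hDz : (0 : ℤ) < ((k : ℤ) - 1) * ((k : ℤ) - 2) := by
    rw [← Nat.cast_sub_one_mul_sub_two (by omega)]
    exact_mod_cast hD
  rw [mul_sub_one_mul_sub_two_sub_eq hdecomp, hfloor, mul_assoc (k : ℤ)]
  exact ⟨Int.dvd_mul_emod_mul _ _ _, Int.ediv_mul_mul_eq_sub_emod _ _ hDz⟩

theorem stmt19 (n k p : ℕ) (hk : 4 ≤ k) (hkn : k < n)
    (hp1 : 1 ≤ p) (hp2 : p ≤ k - 2)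
    (h1 : (k - 2) ∣ (n - 2))
    (h2 : (n - 1) * (n - 2) ≡ p * (k - 2) [MOD (k - 1) * (k - 2)]) :
    ((k : ℤ) - 1) * ((k : ℤ) - 2) ∣
      (((n : ℤ) * ((n : ℤ) - 1) * ((n : ℤ) - 2)
          - (n : ℤ) * ((p : ℤ) + (k : ℤ) - 1) * ((k : ℤ) - 2))
        % ((k : ℤ) * ((k : ℤ) - 1) * ((k : ℤ) - 2))) ∧
    ((n * ((n - 1) * (n - 2) / ((k - 1) * (k - 2)) - 1) / k : ℕ) : ℤ)
        * ((k : ℤ) * ((k : ℤ) - 1) * ((k : ℤ) - 2)) =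
      (n : ℤ) * ((n : ℤ) - 1) * ((n : ℤ) - 2)
        - (n : ℤ) * ((p : ℤ) + (k : ℤ) - 1) * ((k : ℤ) - 2)
        - (((n : ℤ) * ((n : ℤ) - 1) * ((n : ℤ) - 2)
            - (n : ℤ) * ((p : ℤ) + (k : ℤ) - 1) * ((k : ℤ) - 2))
          % ((k : ℤ) * ((k : ℤ) - 1) * ((k : ℤ) - 2))) :=
  stmt19_general n k p hk hkn hp2 h2
end
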